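/- arXiv:2003.09787 — 7 statements merged into one kernel-verified Lean document; each statement's English description precedes it below -/
import Mathlib

section
/- Let A be a unital C*-algebra and let φ : Mₙ → A be a completely positive contractive order zero map (encoded as a *-homomorphism π : C₀((0,1], Mₙ) → A with φ(x) = π(ι_x)). Then for every 0 < ε < 1 there exists a completely positive contractive order zero map ψ : Mₙ → A such that 1 − ψ(1) = (1/(1−ε))·(1 − φ(1) − ε)₊ and ‖φ(x) − ψ(x)‖ ≤ ε‖x‖ for all x ∈ Mₙ. -/
open scoped Matrix.Norms.L2Operator ZeroAtInfty

noncomputable section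

/-- The C*-algebra of `n × n` complex matrices with the (L2) operator norm. -/
abbrev MatC (n : ℕ) : Type := Matrix (Fin n) (Fin n) ℂ

/-- The cone `C₀((0,1], Mₙ)` of continuous `Mₙ`-valued functions on `(0,1]` vanishing at `0`. -/
abbrev MatrixCone (n : ℕ) : Type := C₀(Set.Ioc (0:ℝ) 1, MatC n)

/-- The element `ι_x : t ↦ t • x` of the cone `C₀((0,1], Mₙ)`.  A completely positive
contractive order zero map `φ : Mₙ → A` is encoded as a `*`-homomorphism
`π : C₀((0,1], Mₙ) →⋆ₙₐ[ℂ] A` via `φ x = π (iota x)`. -/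
def iota {n : ℕ} (x : MatC n) : MatrixCone n where
  toFun t := (t : ℝ) • x
  continuous_toFun := by
    exact (continuous_subtype_val.smul continuous_const)
  zero_at_infty' := by
    refine (Filter.hasBasis_cocompact.tendsto_iff Metric.nhds_basis_closedBall).mpr ?_
    intro ε hε
    have hx : (0:ℝ) < ‖x‖ + 1 := by positivity
    set δ : ℝ := min (ε / (‖x‖ + 1)) 1 with hδdef
    have hδpos : 0 < δ := lt_min (by positivity) one_pos
    refine ⟨Subtype.val ⁻¹' Set.Icc δ 1, ?_, ?_⟩
    · rw [Subtype.isCompact_iff, Subtype.image_preimage_coe]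
      have : Set.Ioc (0:ℝ) 1 ∩ Set.Icc δ 1 = Set.Icc δ 1 := by
        refine Set.inter_eq_right.mpr ?_
        intro t ht
        exact ⟨lt_of_lt_of_le hδpos ht.1, ht.2⟩
      rw [this]
      exact isCompact_Icc
    · intro t ht
      simp only [Set.mem_compl_iff, Set.mem_preimage, Set.mem_Icc, not_and, not_le] at ht
      have h1 : (t : ℝ) < δ := by
        rcases lt_or_ge (t : ℝ) δ with h | h
        · exact h
        · exact absurd t.2.2 (not_le.mpr (ht h))
      have ht0 : (0:ℝ) ≤ (t : ℝ) := le_of_lt t.2.1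
      have hnorm : ‖(t : ℝ) • x‖ = (t : ℝ) * ‖x‖ := by
        rw [norm_smul, Real.norm_eq_abs, abs_of_nonneg ht0]
      refine Metric.mem_closedBall.mpr ?_
      rw [dist_zero_right, hnorm]
      have h2 : (t : ℝ) * ‖x‖ ≤ (t : ℝ) * (‖x‖ + 1) := by nlinarith [norm_nonneg x]
      have h3 : (t : ℝ) * (‖x‖ + 1) ≤ δ * (‖x‖ + 1) := by nlinarith
      have h4 : δ * (‖x‖ + 1) ≤ (ε / (‖x‖ + 1)) * (‖x‖ + 1) := by
        have := min_le_left (ε / (‖x‖ + 1)) 1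
        nlinarith
      have h5 : (ε / (‖x‖ + 1)) * (‖x‖ + 1) = ε := by field_simp
      linarith


namespace OrderZeroPerturbAux

instance (n : ℕ) : CStarAlgebra (MatC n) := {}

/-- The reparametrization function `t ↦ min (t/(1-ε)) 1`. -/
def gfun (ε : ℝ) (t : ℝ) : ℝ := min (t / (1 - ε)) 1

lemma gfun_zero {ε : ℝ} (hε1 : ε < 1) : gfun ε 0 = 0 := by
  have h : (0:ℝ) < 1 - ε := by linarith
  simp [gfun]

lemma gfun_mem {ε : ℝ} (hε1 : ε < 1) {t : ℝ} (ht : t ∈ Set.Ioc (0:ℝ) 1) :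
    gfun ε t ∈ Set.Ioc (0:ℝ) 1 := by
  have h : (0:ℝ) < 1 - ε := by linarith
  exact ⟨lt_min (div_pos ht.1 h) one_pos, min_le_right _ _⟩

lemma gfun_continuous {ε : ℝ} : Continuous (gfun ε) := by
  unfold gfun; fun_prop

lemma key_identity {ε : ℝ} (hε0 : 0 < ε) (hε1 : ε < 1) (t : ℝ) :
    1 - gfun ε t = (1 - ε)⁻¹ * max (1 - t - ε) 0 := by
  have h : (0:ℝ) < 1 - ε := by linarith
  unfold gfun
  rcases le_total t (1 - ε) with h' | h'
  · rw [min_eq_left (by rw [div_le_one h]; linarith), max_eq_left (by linarith)]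
    field_simp
    ring
  · rw [min_eq_right (by rw [le_div_iff₀ h]; linarith), max_eq_right (by linarith)]
    simp

lemma gfun_dist {ε : ℝ} (hε0 : 0 < ε) (hε1 : ε < 1) {t : ℝ} (ht : t ∈ Set.Ioc (0:ℝ) 1) :
    |t - gfun ε t| ≤ ε := by
  have h : (0:ℝ) < 1 - ε := by linarith
  unfold gfun
  rcases le_total t (1 - ε) with h' | h'
  · rw [min_eq_left (by rw [div_le_one h]; linarith)]
    rw [abs_le]
    have h1 : t ≤ t / (1 - ε) := by
      rw [le_div_iff₀ h]; nlinarith [ht.1.le]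
    have h2 : t / (1 - ε) - t ≤ ε := by
      rw [div_sub' h.ne']
      rw [div_le_iff₀ h]
      nlinarith [ht.1.le]
    constructor <;> linarith
  · rw [min_eq_right (by rw [le_div_iff₀ h]; linarith)]
    rw [abs_le]
    constructor <;> linarith [ht.1.le, ht.2, hε0.le]

/-- The reparametrization as a cocompact map of `(0,1]` to itself. -/
def hmap (ε : ℝ) (hε1 : ε < 1) :
    CocompactMap (Set.Ioc (0:ℝ) 1) (Set.Ioc (0:ℝ) 1) where
  toFun t := ⟨gfun ε t, gfun_mem hε1 t.2⟩
  continuous_toFun := (gfun_continuous.comp continuous_subtype_val).subtype_mk _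
  cocompact_tendsto' := by
    have h : (0:ℝ) < 1 - ε := by linarith
    rw [Filter.hasBasis_cocompact.tendsto_iff Filter.hasBasis_cocompact]
    intro K hK
    rcases K.eq_empty_or_nonempty with hKe | hKne
    · exact ⟨∅, isCompact_empty, by simp [hKe]⟩
    · obtain ⟨m, hmK, hmin⟩ := hK.exists_isMinOn hKne continuous_subtype_val.continuousOn
      have hm0 : (0:ℝ) < (m : ℝ) := m.2.1
      have hδ : (0:ℝ) < (m : ℝ) * (1 - ε) := by positivity
      refine ⟨Subtype.val ⁻¹' Set.Icc ((m : ℝ) * (1 - ε)) 1, ?_, ?_⟩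
      · rw [Subtype.isCompact_iff, Subtype.image_preimage_coe]
        have : Set.Ioc (0:ℝ) 1 ∩ Set.Icc ((m : ℝ) * (1 - ε)) 1
            = Set.Icc ((m : ℝ) * (1 - ε)) 1 := by
          refine Set.inter_eq_right.mpr fun t ht => ⟨lt_of_lt_of_le hδ ht.1, ht.2⟩
        rw [this]
        exact isCompact_Icc
      · intro t ht hmem
        apply ht
        have h1 : (m : ℝ) ≤ gfun ε t := hmin hmem
        have h2 : gfun ε t ≤ (t : ℝ) / (1 - ε) := min_le_left _ _
        have h3 : (m : ℝ) * (1 - ε) ≤ (t : ℝ) := by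
          have := h1.trans h2
          rw [le_div_iff₀ h] at this
          linarith
        exact ⟨h3, t.2.2⟩

/-- Composition with `hmap` as a non-unital star algebra homomorphism of the cone. -/
def compHom {n : ℕ} (ε : ℝ) (hε1 : ε < 1) : MatrixCone n →⋆ₙₐ[ℂ] MatrixCone n :=
  { ZeroAtInftyContinuousMap.compNonUnitalAlgHom (R := ℂ) (hmap ε hε1) with
    map_star' := fun _ => rfl }

@[simp] lemma compHom_apply {n : ℕ} (ε : ℝ) (hε1 : ε < 1) (f : MatrixCone n)
    (t : Set.Ioc (0:ℝ) 1) : compHom ε hε1 f t = f ((hmap ε hε1) t) := rfl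

/-- Evaluation at a point, as a non-unital star algebra homomorphism. -/
def evalHom (n : ℕ) (s : Set.Ioc (0:ℝ) 1) : MatrixCone n →⋆ₙₐ[ℂ] MatC n where
  toFun f := f s
  map_smul' _ _ := rfl
  map_zero' := rfl
  map_add' _ _ := rfl
  map_mul' _ _ := rfl
  map_star' _ := rfl

lemma continuous_evalHom (n : ℕ) (s : Set.Ioc (0:ℝ) 1) : Continuous (evalHom n s) := by
  have h : Continuous fun f : MatrixCone n => f.toBCF s :=
    (continuous_eval_const s).comp
      ZeroAtInftyContinuousMap.isometry_toBCF.continuous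
  exact h

lemma isSelfAdjoint_iota_one {n : ℕ} : IsSelfAdjoint (iota (1 : MatC n)) := by
  rw [IsSelfAdjoint]
  ext1 t
  show star ((t:ℝ) • (1 : MatC n)) = (t:ℝ) • 1
  rw [star_smul, star_one, star_trivial]

lemma smul_one_eq_algebraMap {n : ℕ} (r : ℝ) :
    r • (1 : MatC n) = algebraMap ℝ (MatC n) r := by
  rw [Algebra.algebraMap_eq_smul_one]

lemma compHom_iota_one {n : ℕ} (ε : ℝ) (hε0 : 0 < ε) (hε1 : ε < 1) :
    compHom (n := n) ε hε1 (iota 1) = cfcₙ (gfun ε) (iota (1 : MatC n)) := by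
  have hg : Continuous (gfun ε) := gfun_continuous
  have hg0 : gfun ε 0 = 0 := gfun_zero hε1
  refine ZeroAtInftyContinuousMap.ext fun s => ?_
  have h1 : evalHom n s (cfcₙ (gfun ε) (iota (1 : MatC n)))
      = cfcₙ (gfun ε) (evalHom n s (iota (1 : MatC n))) :=
    NonUnitalStarAlgHomClass.map_cfcₙ (evalHom n s) (gfun ε) _ hg.continuousOn hg0
      (continuous_evalHom n s) isSelfAdjoint_iota_one (isSelfAdjoint_iota_one.map _)
  have h2 : evalHom n s (iota (1 : MatC n)) = algebraMap ℝ (MatC n) (s : ℝ) := by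
    rw [← smul_one_eq_algebraMap]; rfl
  have h3 : cfcₙ (gfun ε) (algebraMap ℝ (MatC n) (s : ℝ))
      = algebraMap ℝ (MatC n) (gfun ε (s : ℝ)) := by
    rw [cfcₙ_eq_cfc hg.continuousOn hg0, cfc_algebraMap]
  show compHom (n := n) ε hε1 (iota 1) s = evalHom n s (cfcₙ (gfun ε) (iota (1 : MatC n)))
  rw [h1, h2, h3, ← smul_one_eq_algebraMap]
  rfl

end OrderZeroPerturbAux

/-- Let `A` be a unital C*-algebra and `φ : Mₙ → A` a c.p.c. order zero
map (encoded as a `*`-homomorphism `π` from the cone).  For every `0 < ε < 1` there is a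
c.p.c. order zero map `ψ : Mₙ → A` with `1 - ψ(1) = (1/(1-ε)) ⬝ (1 - φ(1) - ε)₊` and
`‖φ(x) - ψ(x)‖ ≤ ε ‖x‖` for all `x ∈ Mₙ`. -/
theorem orderZero_perturbation
    {A : Type*} [CStarAlgebra A] {n : ℕ}
    (π : MatrixCone n →⋆ₙₐ[ℂ] A) :
    ∀ ε : ℝ, 0 < ε → ε < 1 →
      ∃ ψ : MatrixCone n →⋆ₙₐ[ℂ] A,
        1 - ψ (iota 1) =
          (((1 - ε : ℝ) : ℂ))⁻¹ • cfc (fun t : ℝ => max (t - ε) 0) (1 - π (iota 1)) ∧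
        ∀ x : MatC n, ‖π (iota x) - ψ (iota x)‖ ≤ ε * ‖x‖ := by
  classical
  intro ε hε0 hε1
  have h1ε : (0:ℝ) < 1 - ε := by linarith
  have hg : Continuous (OrderZeroPerturbAux.gfun ε) := OrderZeroPerturbAux.gfun_continuous
  have hg0 : OrderZeroPerturbAux.gfun ε 0 = 0 := OrderZeroPerturbAux.gfun_zero hε1
  have hπcont : Continuous π := by
    refine AddMonoidHomClass.continuous_of_bound π 1 fun a => ?_
    simpa using NonUnitalStarAlgHom.norm_apply_le π a
  set ψ : MatrixCone n →⋆ₙₐ[ℂ] A := π.comp (OrderZeroPerturbAux.compHom ε hε1) with hψ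
  refine ⟨ψ, ?_, ?_⟩
  · -- the identity for the unit
    have hsa : IsSelfAdjoint (iota (1 : MatC n)) := OrderZeroPerturbAux.isSelfAdjoint_iota_one
    have hsaA : IsSelfAdjoint (π (iota (1 : MatC n))) := hsa.map π
    have step1 : ψ (iota 1) = cfcₙ (OrderZeroPerturbAux.gfun ε) (π (iota (1 : MatC n))) := by
      rw [hψ]
      show π (OrderZeroPerturbAux.compHom ε hε1 (iota 1)) = _
      rw [OrderZeroPerturbAux.compHom_iota_one ε hε0 hε1]
      exact NonUnitalStarAlgHomClass.map_cfcₙ π (OrderZeroPerturbAux.gfun ε) _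
        hg.continuousOn hg0 hπcont hsa hsaA
    set a : A := π (iota (1 : MatC n)) with ha
    have step2 : cfcₙ (OrderZeroPerturbAux.gfun ε) a = cfc (OrderZeroPerturbAux.gfun ε) a :=
      cfcₙ_eq_cfc hg.continuousOn hg0
    have hsub : (1 : A) - a = cfc (fun t : ℝ => 1 - t) a := by
      rw [cfc_sub (fun _ : ℝ => (1:ℝ)) (fun t : ℝ => t) a (by fun_prop) (by fun_prop)]
      rw [cfc_id' ℝ a, cfc_const (1:ℝ) a, map_one]
    have hcomp : cfc (fun t : ℝ => max (t - ε) 0) ((1 : A) - a)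
        = cfc (fun t : ℝ => max (1 - t - ε) 0) a := by
      rw [hsub, ← cfc_comp' (fun t : ℝ => max (t - ε) 0) (fun t : ℝ => 1 - t) a
        (by fun_prop) (by fun_prop)]
    have hsmulcoe : (((1 - ε : ℝ) : ℂ))⁻¹ • cfc (fun t : ℝ => max (t - ε) 0) ((1:A) - a)
        = ((1 - ε : ℝ)⁻¹ : ℝ) • cfc (fun t : ℝ => max (t - ε) 0) ((1:A) - a) := by
      rw [← Complex.ofReal_inv, ← algebraMap_smul (R := ℝ) ℂ]
      rfl
    rw [step1, step2, hsmulcoe, hcomp]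
    rw [← cfc_smul ((1 - ε : ℝ)⁻¹) (fun t : ℝ => max (1 - t - ε) 0) a (by fun_prop)]
    have h6 : (1 : A) - cfc (OrderZeroPerturbAux.gfun ε) a
        = cfc (fun t : ℝ => 1 - OrderZeroPerturbAux.gfun ε t) a := by
      rw [cfc_sub (fun _ : ℝ => (1:ℝ)) (OrderZeroPerturbAux.gfun ε) a (by fun_prop)
        hg.continuousOn, cfc_const (1:ℝ) a, map_one]
    rw [h6]
    exact cfc_congr fun t _ => by
      simpa [smul_eq_mul] using OrderZeroPerturbAux.key_identity hε0 hε1 t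
  · -- the norm estimate
    intro x
    have heq : π (iota x) - ψ (iota x)
        = π (iota x - OrderZeroPerturbAux.compHom ε hε1 (iota x)) := by
      rw [map_sub]; rfl
    rw [heq]
    refine (NonUnitalStarAlgHom.norm_apply_le π _).trans ?_
    rw [← ZeroAtInftyContinuousMap.norm_toBCF_eq_norm]
    rw [BoundedContinuousFunction.norm_le (by positivity)]
    intro t
    have hval : (iota x - OrderZeroPerturbAux.compHom ε hε1 (iota x)).toBCF t
        = ((t : ℝ) - OrderZeroPerturbAux.gfun ε (t : ℝ)) • x := by
      show iota x t - iota x ((OrderZeroPerturbAux.hmap ε hε1) t) = _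
      show (t : ℝ) • x - (OrderZeroPerturbAux.gfun ε (t : ℝ)) • x = _
      rw [← sub_smul]
    rw [hval, norm_smul, Real.norm_eq_abs]
    exact mul_le_mul_of_nonneg_right (OrderZeroPerturbAux.gfun_dist hε0 hε1 t.2) (norm_nonneg x)

end
end

section
/- Let A be a simple unital C*-algebra and let α be an automorphism of A which has the generalized tracial Rokhlin property. Then for every integer m ≥ 1, the automorphism α^m also has the generalized tracial Rokhlin property. (This is the restriction, to the subgroup mℤ ⊆ ℤ, of the statement that the generalized tracial Rokhlin property passes to subgroups.) -/
open scoped Matrix.Norms.L2Operator ZeroAtInfty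

noncomputable section

/-- Cuntz subequivalence: `a ≾ b` if for every `δ > 0` there is `x` with
`‖x * b * x* - a‖ < δ`. -/
def CuntzSubequiv {A : Type*} [CStarAlgebra A] (a b : A) : Prop :=
  ∀ δ : ℝ, 0 < δ → ∃ x : A, ‖x * b * star x - a‖ < δ

/-- A unital C*-algebra `A` is tracially Z-absorbing if `A ≇ ℂ` and for every `n`, every
nonzero positive `a`, every `ε > 0` and every finite `F ⊆ A` there is a c.p.c. order zero map
`φ : Mₙ → A` (encoded as a `*`-homomorphism `π` from the cone, `φ x = π (iota x)`) with
`1 - φ(1) ≾ a` and `‖[φ x, y]‖ < ε ‖x‖` for `x ∈ Mₙ`, `y ∈ F`. -/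
def TraciallyZAbsorbing (A : Type*) [CStarAlgebra A] [PartialOrder A] [StarOrderedRing A] :
    Prop :=
  (¬ Nonempty (A ≃⋆ₐ[ℂ] ℂ)) ∧
  ∀ (n : ℕ) (a : A), 0 ≤ a → a ≠ 0 → ∀ ε : ℝ, 0 < ε → ∀ F : Finset A,
    ∃ π : MatrixCone n →⋆ₙₐ[ℂ] A,
      CuntzSubequiv (1 - π (iota 1)) a ∧
      ∀ x : MatC n, ∀ y ∈ F, ‖π (iota x) * y - y * π (iota x)‖ < ε * ‖x‖

/-- A unital C*-algebra is stably finite if every isometry in every matrix algebra over it is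
a unitary. -/
def StablyFinite (A : Type*) [CStarAlgebra A] : Prop :=
  ∀ (n : ℕ) (s : Matrix (Fin n) (Fin n) A), star s * s = 1 → s * star s = 1

/-- A C*-algebra is simple if it has no nontrivial closed two-sided ideals. -/
def CStarSimple (A : Type*) [CStarAlgebra A] : Prop :=
  ∀ I : TwoSidedIdeal A, IsClosed (I : Set A) → I = ⊥ ∨ I = ⊤

/-- The `⋆`-automorphisms of `A` form a group, with `(e * f) x = e (f x)`. -/
noncomputable instance starAlgEquivGroup {A : Type*} [CStarAlgebra A] :
    Group (A ≃⋆ₐ[ℂ] A) where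
  mul e f := f.trans e
  one := StarAlgEquiv.refl ℂ A
  inv := StarAlgEquiv.symm
  mul_assoc e f g := rfl
  one_mul e := rfl
  mul_one e := rfl
  inv_mul_cancel e := StarAlgEquiv.ext fun x => e.symm_apply_apply x

/-- An automorphism `α` of a simple unital C*-algebra has the generalized tracial Rokhlin
property if for every finite `F ⊆ A`, `ε > 0`, `k ∈ ℕ` and nonzero positive `a ∈ A` there are
pairwise orthogonal positive norm-one contractions `e₁, …, e_k` with `1 - ∑ eⱼ ≾ a`,
`‖[eⱼ, y]‖ < ε` for `y ∈ F`, and `‖α (eⱼ) - e_{j+1}‖ < ε`. -/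
def GenTracialRokhlinZ {A : Type*} [CStarAlgebra A] [PartialOrder A] [StarOrderedRing A]
    (α : A ≃⋆ₐ[ℂ] A) : Prop :=
  ∀ (F : Finset A) (ε : ℝ), 0 < ε → ∀ (k : ℕ) (a : A), 0 ≤ a → a ≠ 0 →
    ∃ e : Fin k → A,
      (∀ j, 0 ≤ e j ∧ ‖e j‖ = 1) ∧
      (∀ i j, i ≠ j → e i * e j = 0) ∧
      CuntzSubequiv (1 - ∑ j, e j) a ∧
      (∀ j, ∀ y ∈ F, ‖e j * y - y * e j‖ < ε) ∧
      (∀ (j : Fin k) (hj : (j : ℕ) + 1 < k), ‖α (e j) - e ⟨(j : ℕ) + 1, hj⟩‖ < ε)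

section AuxLemmas

variable {A : Type*} [CStarAlgebra A] [PartialOrder A] [StarOrderedRing A]

lemma sa_norm_two_pow {x : A} (hx : IsSelfAdjoint x) (n : ℕ) :
    ‖x ^ 2 ^ n‖ = ‖x‖ ^ 2 ^ n := by
  simpa [NNReal.coe_pow] using congrArg NNReal.toReal (hx.nnnorm_pow_two_pow n)

lemma orth_sum_sq {ι : Type*} [Fintype ι] (g : ι → A)
    (horth : ∀ i j, i ≠ j → g i * g j = 0) :
    (∑ i, g i) ^ 2 = ∑ i, g i ^ 2 := by
  rw [sq, Finset.sum_mul_sum]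
  refine Finset.sum_congr rfl fun i _ => ?_
  rw [Finset.sum_eq_single i (fun j _ hji => horth i j (Ne.symm hji))
    (fun h => absurd (Finset.mem_univ i) h), ← sq]

lemma orth_sum_norm_le_one {ι : Type*} [Fintype ι] (g : ι → A)
    (hg0 : ∀ i, 0 ≤ g i) (hg1 : ∀ i, ‖g i‖ ≤ 1)
    (horth : ∀ i j, i ≠ j → g i * g j = 0) : ‖∑ i, g i‖ ≤ 1 := by
  have key : ∀ n : ℕ, ∀ g : ι → A, (∀ i, 0 ≤ g i) → (∀ i, ‖g i‖ ≤ 1) →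
      (∀ i j, i ≠ j → g i * g j = 0) →
      ‖∑ i, g i‖ ^ 2 ^ n ≤ (Fintype.card ι : ℝ) := by
    intro n
    induction n with
    | zero =>
        intro g hg0 hg1 horth
        simp only [pow_zero, pow_one]
        calc ‖∑ i, g i‖ ≤ ∑ i, ‖g i‖ := norm_sum_le _ _
          _ ≤ ∑ _i : ι, (1 : ℝ) := Finset.sum_le_sum fun i _ => hg1 i
          _ = (Fintype.card ι : ℝ) := by simp
    | succ n ih =>
        intro g hg0 hg1 horth
        have hsa : IsSelfAdjoint (∑ i, g i) :=
          IsSelfAdjoint.of_nonneg (Finset.sum_nonneg fun i _ => hg0 i)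
        have hsq : ‖(∑ i, g i) ^ 2‖ = ‖∑ i, g i‖ ^ 2 := by
          simpa using sa_norm_two_pow hsa 1
        have step : ‖∑ i, g i‖ ^ 2 ^ (n + 1) = ‖∑ i, g i ^ 2‖ ^ 2 ^ n := by
          rw [pow_succ' 2 n, pow_mul, ← hsq, orth_sum_sq g horth]
        rw [step]
        refine ih (fun i => g i ^ 2) (fun i => by
            show 0 ≤ g i ^ 2
            rw [sq]
            nth_rewrite 1 [← (IsSelfAdjoint.of_nonneg (hg0 i)).star_eq]
            exact star_mul_self_nonneg (g i))
          (fun i => by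
            show ‖g i ^ 2‖ ≤ 1
            calc ‖g i ^ 2‖ ≤ ‖g i‖ ^ 2 := norm_pow_le' (g i) two_pos
              _ ≤ 1 := pow_le_one₀ (norm_nonneg _) (hg1 i))
          (fun i j hij => by
            show g i ^ 2 * g j ^ 2 = 0
            have h1 : g i * g j = 0 := horth i j hij
            calc g i ^ 2 * g j ^ 2 = g i * (g i * g j) * g j := by
                  rw [sq, sq]; simp only [mul_assoc]
              _ = 0 := by rw [h1]; simp)
  by_contra h
  push_neg at h
  obtain ⟨n, hn⟩ := pow_unbounded_of_one_lt (Fintype.card ι : ℝ) h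
  have h1 : ‖∑ i, g i‖ ^ n ≤ ‖∑ i, g i‖ ^ 2 ^ n :=
    pow_le_pow_right₀ h.le (Nat.lt_two_pow_self (n := n)).le
  have h2 := key n g hg0 hg1 horth
  linarith

end AuxLemmas

/-- Let `A` be a simple unital C*-algebra and `α` an automorphism of `A`
with the generalized tracial Rokhlin property.  Then for every integer `m ≥ 1` the power
`α^m` also has the generalized tracial Rokhlin property. -/
theorem genTracialRokhlinZ_pow
    {A : Type*} [CStarAlgebra A] [PartialOrder A] [StarOrderedRing A]
    (hsimple : CStarSimple A)
    (α : A ≃⋆ₐ[ℂ] A)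
    (hRok : GenTracialRokhlinZ α) :
    ∀ m : ℕ, 1 ≤ m → GenTracialRokhlinZ (α ^ m) := by
  intro m hm F ε hε k a ha hane
  have hm1 : (1 : ℝ) ≤ (m : ℝ) := by exact_mod_cast hm
  set ε' : ℝ := ε / ((m : ℝ) * m + 1) with hε'def
  have hc : (0 : ℝ) < (m : ℝ) * m + 1 := by positivity
  have hε' : 0 < ε' := div_pos hε hc
  have hε'eq : ε' * ((m : ℝ) * m + 1) = ε := by
    rw [hε'def]; field_simp
  obtain ⟨e, he01, horth, hcuntz, hcomm, hstep⟩ := hRok F ε' hε' (k * m) a ha hane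
  -- the index map `(j, i) ↦ i + m * j`
  set idx : Fin k → Fin m → Fin (k * m) := fun j i => finProdFinEquiv (j, i) with hidxdef
  have hidx : ∀ (j : Fin k) (i : Fin m), ((idx j i : Fin (k * m)) : ℕ) = (i : ℕ) + m * j :=
    fun j i => rfl
  -- powers of α act by iteration
  have hpow_succ : ∀ (p : ℕ) (x : A), (α ^ (p + 1)) x = (α ^ p) (α x) := by
    intro p x; rw [pow_succ]; rfl
  have hpow_zero : ∀ x : A, (α ^ 0) x = x := by
    intro x; rw [pow_zero]; rfl
  -- approximate orbit chain
  have chain : ∀ (p : ℕ) (l : Fin (k * m)) (h : (l : ℕ) + p < k * m),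
      ‖(α ^ p) (e l) - e ⟨(l : ℕ) + p, h⟩‖ ≤ p * ε' := by
    intro p
    induction p with
    | zero =>
        intro l h
        have : e ⟨(l : ℕ) + 0, h⟩ = e l := congrArg e (Fin.ext (Nat.add_zero _))
        rw [hpow_zero, this, sub_self, norm_zero]
        simp
    | succ p ih =>
        intro l h
        have hl1 : (l : ℕ) + 1 < k * m := by omega
        have hlp : ((⟨(l : ℕ) + 1, hl1⟩ : Fin (k * m)) : ℕ) + p < k * m := by
          simp only []; omega
        have keyEq : (α ^ (p + 1)) (e l) - e ⟨(l : ℕ) + (p + 1), h⟩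
            = (α ^ p) (α (e l) - e ⟨(l : ℕ) + 1, hl1⟩)
              + ((α ^ p) (e ⟨(l : ℕ) + 1, hl1⟩)
                  - e ⟨((⟨(l : ℕ) + 1, hl1⟩ : Fin (k * m)) : ℕ) + p, hlp⟩) := by
          have h2 : e ⟨(l : ℕ) + (p + 1), h⟩
              = e ⟨((⟨(l : ℕ) + 1, hl1⟩ : Fin (k * m)) : ℕ) + p, hlp⟩ := by
            congr 1; exact Fin.ext (by simp; omega)
          rw [hpow_succ, h2, map_sub]
          abel
        rw [keyEq]
        calc ‖(α ^ p) (α (e l) - e ⟨(l : ℕ) + 1, hl1⟩)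
              + ((α ^ p) (e ⟨(l : ℕ) + 1, hl1⟩) - e ⟨_ + p, hlp⟩)‖
            ≤ ‖(α ^ p) (α (e l) - e ⟨(l : ℕ) + 1, hl1⟩)‖
              + ‖(α ^ p) (e ⟨(l : ℕ) + 1, hl1⟩) - e ⟨_ + p, hlp⟩‖ := norm_add_le _ _
          _ = ‖α (e l) - e ⟨(l : ℕ) + 1, hl1⟩‖
              + ‖(α ^ p) (e ⟨(l : ℕ) + 1, hl1⟩) - e ⟨_ + p, hlp⟩‖ := by
                rw [StarAlgEquiv.norm_map (α ^ p)]
          _ ≤ ε' + p * ε' := add_le_add (le_of_lt (hstep l hl1)) (ih _ hlp)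
          _ = (p + 1 : ℕ) * ε' := by push_cast; ring
  -- the towers for α ^ m
  set f : Fin k → A := fun j => ∑ i : Fin m, e (idx j i) with hfdef
  have hf0 : ∀ j, 0 ≤ f j := fun j => Finset.sum_nonneg fun i _ => (he01 _).1
  have hforth : ∀ i j, i ≠ j → f i * f j = 0 := by
    intro j j' hjj'
    rw [hfdef]
    simp only []
    rw [Finset.sum_mul_sum]
    refine Finset.sum_eq_zero fun i _ => Finset.sum_eq_zero fun i' _ => ?_
    refine horth _ _ fun hEq => ?_
    have := finProdFinEquiv.injective hEq
    exact hjj' (congrArg Prod.fst this)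
  refine ⟨f, ?_, hforth, ?_, ?_, ?_⟩
  · -- positivity and norm one
    intro j
    refine ⟨hf0 j, le_antisymm ?_ ?_⟩
    · exact orth_sum_norm_le_one _ (fun i => (he01 _).1) (fun i => le_of_eq (he01 _).2)
        (fun i i' hii' => horth _ _ fun hEq => hii' <| by
          have := finProdFinEquiv.injective hEq
          exact congrArg Prod.snd this)
    · have hi0 : (0 : ℕ) < m := hm
      have hle : e (idx j ⟨0, hi0⟩) ≤ f j := by
        rw [hfdef]
        exact Finset.single_le_sum (fun i _ => (he01 _).1) (Finset.mem_univ _)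
      calc (1 : ℝ) = ‖e (idx j ⟨0, hi0⟩)‖ := (he01 _).2.symm
        _ ≤ ‖f j‖ := CStarAlgebra.norm_le_norm_of_nonneg_of_le (he01 _).1 hle
  · -- Cuntz subequivalence: the total sums agree
    have hsum : ∑ j, f j = ∑ l, e l := by
      have h1 : ∑ j, f j = ∑ p : Fin k × Fin m, e (finProdFinEquiv p) :=
        (Fintype.sum_prod_type (fun p : Fin k × Fin m => e (finProdFinEquiv p))).symm
      rw [h1, Equiv.sum_comp finProdFinEquiv e]
    rw [hsum]
    exact hcuntz
  · -- approximate commutation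
    intro j y hy
    have hdiff : f j * y - y * f j = ∑ i : Fin m, (e (idx j i) * y - y * e (idx j i)) := by
      rw [hfdef]
      simp only []
      rw [Finset.sum_mul, Finset.mul_sum, ← Finset.sum_sub_distrib]
    rw [hdiff]
    have hne : (Finset.univ : Finset (Fin m)).Nonempty :=
      Finset.univ_nonempty_iff.mpr ⟨⟨0, hm⟩⟩
    calc ‖∑ i : Fin m, (e (idx j i) * y - y * e (idx j i))‖
        ≤ ∑ i : Fin m, ‖e (idx j i) * y - y * e (idx j i)‖ := norm_sum_le _ _
      _ < ∑ _i : Fin m, ε' := Finset.sum_lt_sum_of_nonempty hne fun i _ => hcomm _ y hy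
      _ = (m : ℝ) * ε' := by simp [mul_comm]
      _ ≤ ε := by nlinarith
  · -- approximate shift by α ^ m
    intro j hj
    have hbound : ∀ i : Fin m, (i : ℕ) + m * (j : ℕ) + m < k * m := by
      intro i
      have h1 : (i : ℕ) + m * (j : ℕ) + m < m + m * (j : ℕ) + m :=
        Nat.add_lt_add_right (Nat.add_lt_add_right i.isLt _) m
      have h2 : m + m * (j : ℕ) + m = m * ((j : ℕ) + 2) := by ring
      have h3 : m * ((j : ℕ) + 2) ≤ m * k := Nat.mul_le_mul_left m (by omega)
      calc (i : ℕ) + m * (j : ℕ) + m < m * ((j : ℕ) + 2) := h2 ▸ h1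
        _ ≤ m * k := h3
        _ = k * m := Nat.mul_comm m k
    have hshift : ∀ i : Fin m,
        e (idx ⟨(j : ℕ) + 1, hj⟩ i) = e ⟨((idx j i : Fin (k * m)) : ℕ) + m, hbound i⟩ := by
      intro i
      refine congrArg e (Fin.ext ?_)
      show (i : ℕ) + m * ((j : ℕ) + 1) = ((i : ℕ) + m * (j : ℕ)) + m
      ring
    have hdiff : (α ^ m) (f j) - f ⟨(j : ℕ) + 1, hj⟩
        = ∑ i : Fin m, ((α ^ m) (e (idx j i)) - e (idx ⟨(j : ℕ) + 1, hj⟩ i)) := by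
      rw [hfdef]
      simp only []
      rw [map_sum, ← Finset.sum_sub_distrib]
    rw [hdiff]
    calc ‖∑ i : Fin m, ((α ^ m) (e (idx j i)) - e (idx ⟨(j : ℕ) + 1, hj⟩ i))‖
        ≤ ∑ i : Fin m, ‖(α ^ m) (e (idx j i)) - e (idx ⟨(j : ℕ) + 1, hj⟩ i)‖ :=
          norm_sum_le _ _
      _ ≤ ∑ _i : Fin m, (m : ℝ) * ε' := by
          refine Finset.sum_le_sum fun i _ => ?_
          rw [hshift i]
          exact chain m (idx j i) (by rw [hidx]; exact hbound i)
      _ = (m : ℝ) * ((m : ℝ) * ε') := by simp [mul_comm]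
      _ < ε := by nlinarith

end
end

section
/- Let G be a finite group, let A be a simple unital C*-algebra, and let α : G → Aut(A) be an action which has the generalized tracial Rokhlin property. Then for every subgroup H ≤ G, the restricted action α|_H : H → Aut(A) also has the generalized tracial Rokhlin property. -/
open scoped Matrix.Norms.L2Operator ZeroAtInfty

noncomputable section

/-- An action `α : G → Aut(A)` of a finite group on a simple unital C*-algebra has the
generalized tracial Rokhlin property if for every `ε > 0`, finite `F ⊆ A` and nonzero
positive `a ∈ A` there are positive norm-one contractions `{e_g}_{g ∈ G}` with
`e_g e_h = 0` for `g ≠ h`, `1 - ∑ e_g ≾ a`, `‖[e_g, y]‖ < ε` for `y ∈ F`, and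
`‖α_g (e_h) - e_{g h}‖ < ε`. -/
def FiniteGpTracialRokhlin {G A : Type*} [Group G] [Finite G] [CStarAlgebra A]
    [PartialOrder A] [StarOrderedRing A] (α : G →* (A ≃⋆ₐ[ℂ] A)) : Prop :=
  letI : Fintype G := Fintype.ofFinite G
  ∀ (ε : ℝ), 0 < ε → ∀ (F : Finset A) (a : A), 0 ≤ a → a ≠ 0 →
    ∃ e : G → A,
      (∀ g, 0 ≤ e g ∧ ‖e g‖ = 1) ∧
      (∀ g h, g ≠ h → e g * e h = 0) ∧
      CuntzSubequiv (1 - ∑ g, e g) a ∧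
      (∀ g, ∀ y ∈ F, ‖e g * y - y * e g‖ < ε) ∧
      (∀ g h, ‖α g (e h) - e (g * h)‖ < ε)


/-- Auxiliary: if `a * b = 0` then `a ^ n * b = 0` for `n ≥ 1`. -/
lemma myOrth.pow_mul_eq_zero {R : Type*} [Ring R] {a b : R} (hab : a * b = 0) :
    ∀ n, 1 ≤ n → a ^ n * b = 0 := by
  intro n hn
  obtain ⟨k, rfl⟩ : ∃ k, n = k + 1 := ⟨n - 1, by omega⟩
  rw [pow_succ, mul_assoc, hab, mul_zero]

/-- Auxiliary: binomial formula for orthogonal elements. -/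
lemma myOrth.add_pow {R : Type*} [Ring R] {a b : R} (hab : a * b = 0) (hba : b * a = 0) :
    ∀ n, 1 ≤ n → (a + b) ^ n = a ^ n + b ^ n := by
  intro n hn
  induction n with
  | zero => omega
  | succ n ih =>
    rcases Nat.lt_or_ge n 1 with h | h
    · interval_cases n
      simp
    · rw [pow_succ, ih h, add_mul, mul_add, mul_add,
        myOrth.pow_mul_eq_zero hab n h, myOrth.pow_mul_eq_zero hba n h,
        ← pow_succ, ← pow_succ]
      abel

/-- Auxiliary: powers of a sum of pairwise orthogonal elements. -/
lemma myOrth.sum_pow {R : Type*} [Ring R] {ι : Type*} [DecidableEq ι] (s : Finset ι)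
    (a : ι → R) (horth : ∀ i ∈ s, ∀ j ∈ s, i ≠ j → a i * a j = 0) :
    ∀ n, 1 ≤ n → (∑ i ∈ s, a i) ^ n = ∑ i ∈ s, a i ^ n := by
  induction s using Finset.induction with
  | empty => intro n hn; simp [zero_pow (by omega : n ≠ 0)]
  | @insert i s his ih =>
    intro n hn
    have h1 : a i * (∑ j ∈ s, a j) = 0 := by
      rw [Finset.mul_sum]
      exact Finset.sum_eq_zero fun j hj => horth i (by simp) j (by simp [hj])
        (by rintro rfl; exact his hj)
    have h2 : (∑ j ∈ s, a j) * a i = 0 := by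
      rw [Finset.sum_mul]
      exact Finset.sum_eq_zero fun j hj => horth j (by simp [hj]) i (by simp)
        (by rintro rfl; exact his hj)
    rw [Finset.sum_insert his, myOrth.add_pow h1 h2 n hn, Finset.sum_insert his,
      ih (fun x hx y hy => horth x (by simp [hx]) y (by simp [hy])) n hn]

/-- Auxiliary: a sum of pairwise orthogonal positive contractions is a contraction. -/
lemma myOrth.norm_sum_le_one {A : Type*} [CStarAlgebra A] [PartialOrder A] [StarOrderedRing A]
    {ι : Type*} [DecidableEq ι] (s : Finset ι) (a : ι → A)
    (hpos : ∀ i ∈ s, 0 ≤ a i) (hnorm : ∀ i ∈ s, ‖a i‖ ≤ 1)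
    (horth : ∀ i ∈ s, ∀ j ∈ s, i ≠ j → a i * a j = 0) :
    ‖∑ i ∈ s, a i‖ ≤ 1 := by
  by_contra hc
  push_neg at hc
  set S := ∑ i ∈ s, a i with hS
  have hsa : IsSelfAdjoint S := by
    rw [hS, IsSelfAdjoint, star_sum]
    exact Finset.sum_congr rfl fun i hi => (hpos i hi).isSelfAdjoint.star_eq
  have key : ∀ k : ℕ, ‖S‖ ^ (2 ^ k) ≤ (s.card : ℝ) := by
    intro k
    have hk1 : 1 ≤ 2 ^ k := Nat.one_le_two_pow
    calc ‖S‖ ^ (2 ^ k) = ‖S ^ (2 ^ k)‖ := by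
          rw [← coe_nnnorm, ← coe_nnnorm, hsa.nnnorm_pow_two_pow, NNReal.coe_pow]
      _ = ‖∑ i ∈ s, a i ^ (2 ^ k)‖ := by rw [hS, myOrth.sum_pow s a horth _ hk1]
      _ ≤ ∑ i ∈ s, ‖a i ^ (2 ^ k)‖ := norm_sum_le _ _
      _ ≤ ∑ i ∈ s, (1 : ℝ) := by
          refine Finset.sum_le_sum fun i hi => ?_
          calc ‖a i ^ (2 ^ k)‖ ≤ ‖a i‖ ^ (2 ^ k) := norm_pow_le' _ (by omega)
            _ ≤ 1 := pow_le_one₀ (norm_nonneg _) (hnorm i hi)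
      _ = (s.card : ℝ) := by simp
  obtain ⟨k, hk⟩ := pow_unbounded_of_one_lt (s.card : ℝ) hc
  have h2 : ‖S‖ ^ k ≤ ‖S‖ ^ (2 ^ k) :=
    pow_le_pow_right₀ (le_of_lt hc) (Nat.lt_two_pow_self (n := k)).le
  linarith [key k]

/-- Let `G` be a finite group, `A` a simple unital C*-algebra and
`α : G → Aut(A)` an action with the generalized tracial Rokhlin property.  Then for every
subgroup `H ≤ G` the restricted action `α|_H` also has the generalized tracial Rokhlin
property. -/
theorem finiteGpTracialRokhlin_restrict_subgroup
    {G A : Type*} [Group G] [Finite G]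
    [CStarAlgebra A] [PartialOrder A] [StarOrderedRing A]
    (hsimple : CStarSimple A)
    (α : G →* (A ≃⋆ₐ[ℂ] A))
    (hRok : FiniteGpTracialRokhlin α)
    (H : Subgroup G) :
    FiniteGpTracialRokhlin (α.comp H.subtype) := by
  classical
  intro ε hε F a ha ha0
  letI : Fintype G := Fintype.ofFinite G
  letI : Fintype ↥H := Fintype.ofFinite ↥H
  set Q := Quotient (QuotientGroup.rightRel H) with hQ
  letI : Fintype Q := Fintype.ofFinite Q
  haveI hne : Nonempty Q := ⟨⟦1⟧⟩
  set σ : Q → G := Quotient.out with hσdef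
  have hmem : ∀ g : G, g * (σ ⟦g⟧)⁻¹ ∈ H := by
    intro g
    have h1 : (⟦σ ⟦g⟧⟧ : Q) = ⟦g⟧ := Quotient.out_eq _
    exact (QuotientGroup.rightRel_apply).mp (Quotient.exact h1)
  have hinj : Function.Injective (fun p : H × Q => (p.1 : G) * σ p.2) := by
    rintro ⟨h, q⟩ ⟨h', q'⟩ heq
    simp only at heq
    have hmemH : σ q' * (σ q)⁻¹ ∈ H := by
      have h3 : σ q' = (h' : G)⁻¹ * ((h : G) * σ q) := by
        rw [heq, ← mul_assoc, inv_mul_cancel, one_mul]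
      have h4 : σ q' * (σ q)⁻¹ = (h' : G)⁻¹ * h := by rw [h3]; group
      rw [h4]; exact mul_mem (inv_mem h'.2) h.2
    have hqq : q = q' := by
      have h5 : (⟦σ q⟧ : Q) = ⟦σ q'⟧ :=
        Quotient.sound ((QuotientGroup.rightRel_apply).mpr hmemH)
      rwa [Quotient.out_eq, Quotient.out_eq] at h5
    subst hqq
    have : (h : G) = h' := mul_right_cancel heq
    exact Prod.ext (Subtype.ext this) rfl
  have hsurj : Function.Surjective (fun p : H × Q => (p.1 : G) * σ p.2) := by
    intro g
    exact ⟨(⟨g * (σ ⟦g⟧)⁻¹, hmem g⟩, ⟦g⟧), by simp⟩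
  set m : ℕ := Fintype.card Q with hm
  have hm0 : 0 < m := Fintype.card_pos
  have hεm : 0 < ε / m := by positivity
  obtain ⟨e, hpos, horth, hcuntz, hcomm, hequiv⟩ := hRok (ε / m) hεm F a ha ha0
  have hne' : ∀ (h : H) (q q' : Q), q ≠ q' → (h : G) * σ q ≠ (h : G) * σ q' := by
    intro h q q' hqq hc
    exact hqq (congrArg Prod.snd (hinj (a₁ := (h, q)) (a₂ := (h, q')) hc))
  refine ⟨fun h : H => ∑ q : Q, e ((h : G) * σ q), ?_, ?_, ?_, ?_, ?_⟩
  · -- positivity and norm one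
    intro h
    constructor
    · exact Finset.sum_nonneg fun q _ => (hpos _).1
    · refine le_antisymm ?_ ?_
      · exact myOrth.norm_sum_le_one Finset.univ (fun q => e ((h : G) * σ q))
          (fun q _ => (hpos _).1) (fun q _ => (hpos _).2.le)
          (fun q _ q' _ hqq => horth _ _ (hne' h q q' hqq))
      · obtain ⟨q₀⟩ := hne
        have hle : e ((h : G) * σ q₀) ≤ ∑ q : Q, e ((h : G) * σ q) :=
          Finset.single_le_sum (f := fun q => e ((h : G) * σ q))
            (fun q _ => (hpos _).1) (Finset.mem_univ q₀)
        have := CStarAlgebra.norm_le_norm_of_nonneg_of_le (hpos ((h : G) * σ q₀)).1 hle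
        rw [(hpos ((h : G) * σ q₀)).2] at this
        exact this
  · -- orthogonality
    intro h h' hhh
    rw [Finset.sum_mul_sum]
    refine Finset.sum_eq_zero fun q _ => Finset.sum_eq_zero fun q' _ => ?_
    refine horth _ _ fun hc => hhh ?_
    exact congrArg Prod.fst (hinj (a₁ := (h, q)) (a₂ := (h', q')) hc)
  · -- Cuntz subequivalence
    have hsum : ∑ h : H, ∑ q : Q, e ((h : G) * σ q) = ∑ g : G, e g := by
      have h1 : ∑ p : H × Q, e ((p.1 : G) * σ p.2) = ∑ g : G, e g :=
        Fintype.sum_bijective _ ⟨hinj, hsurj⟩ _ _ fun p => rfl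
      rw [← h1, Fintype.sum_prod_type]
    show CuntzSubequiv (1 - ∑ h : H, ∑ q : Q, e ((h : G) * σ q)) a
    rw [hsum]
    exact hcuntz
  · -- approximate commutation
    intro h y hy
    calc ‖(∑ q : Q, e ((h : G) * σ q)) * y - y * ∑ q : Q, e ((h : G) * σ q)‖
        = ‖∑ q : Q, (e ((h : G) * σ q) * y - y * e ((h : G) * σ q))‖ := by
          rw [Finset.sum_sub_distrib, Finset.sum_mul, Finset.mul_sum]
      _ ≤ ∑ q : Q, ‖e ((h : G) * σ q) * y - y * e ((h : G) * σ q)‖ := norm_sum_le _ _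
      _ < ∑ _q : Q, ε / m :=
          Finset.sum_lt_sum_of_nonempty Finset.univ_nonempty fun q _ => hcomm _ y hy
      _ = ε := by
          rw [Finset.sum_const, Finset.card_univ, ← hm, nsmul_eq_mul]
          field_simp
  · -- approximate equivariance
    intro g h
    have hcoe : ∀ q : Q, ((g * h : H) : G) * σ q = (g : G) * (((h : G) * σ q)) := by
      intro q; push_cast; rw [mul_assoc]
    calc ‖(α.comp H.subtype) g (∑ q : Q, e ((h : G) * σ q))
            - ∑ q : Q, e (((g * h : H) : G) * σ q)‖
        = ‖∑ q : Q, (α (g : G) (e ((h : G) * σ q)) - e ((g : G) * ((h : G) * σ q)))‖ := by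
          have hA : ((α.comp H.subtype) g) (∑ q : Q, e ((h : G) * σ q))
              = ∑ q : Q, α (g : G) (e ((h : G) * σ q)) :=
            map_sum ((α.comp H.subtype) g) (fun q => e ((h : G) * σ q)) Finset.univ
          have hB : ∑ q : Q, e (((g * h : H) : G) * σ q)
              = ∑ q : Q, e ((g : G) * ((h : G) * σ q)) :=
            Finset.sum_congr rfl fun q _ => by rw [hcoe q]
          rw [hA, hB, ← Finset.sum_sub_distrib]
      _ ≤ ∑ q : Q, ‖α (g : G) (e ((h : G) * σ q)) - e ((g : G) * ((h : G) * σ q))‖ :=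
          norm_sum_le _ _
      _ < ∑ _q : Q, ε / m :=
          Finset.sum_lt_sum_of_nonempty Finset.univ_nonempty fun q _ => hequiv _ _
      _ = ε := by
          rw [Finset.sum_const, Finset.card_univ, ← hm, nsmul_eq_mul]
          field_simp


end
end

section
/- Let A be a unital C*-algebra and let α be an automorphism of A such that α^n is approximately inner for some integer n ≥ 1. Then α is nearly approximately inner. -/
open scoped Matrix.Norms.L2Operator ZeroAtInfty

noncomputable section

/-- An automorphism `α` of a unital C*-algebra is approximately inner if for every finite
`F ⊆ A` and `ε > 0` there is a unitary `u ∈ A` with `‖u a u* - α a‖ < ε` for all `a ∈ F`. -/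
def ApproxInner {A : Type*} [CStarAlgebra A] (α : A ≃⋆ₐ[ℂ] A) : Prop :=
  ∀ (F : Finset A) (ε : ℝ), 0 < ε → ∃ u ∈ unitary A, ∀ a ∈ F, ‖u * a * star u - α a‖ < ε

/-- An automorphism `α` of a unital C*-algebra `A` is nearly approximately inner if there
exist a dense subset `A₀` of the closed unit ball of `A` and a sequence `n_l → ∞` of positive
integers such that for every `ε > 0` and every finite `F ⊆ A₀` there is `l₀` such that for
all `l ≥ l₀` there is a unitary `v` with `‖v a v* - α^{n_l}(a)‖ < ε` for every `a ∈ α^k(F)`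
and every integer `k` with `|k| ≤ 7 n_l`. -/
def NearlyApproxInner {A : Type*} [CStarAlgebra A] (α : A ≃⋆ₐ[ℂ] A) : Prop :=
  ∃ A₀ : Set A, A₀ ⊆ Metric.closedBall (0 : A) 1 ∧ Metric.closedBall (0 : A) 1 ⊆ closure A₀ ∧
  ∃ nl : ℕ → ℕ, (∀ l, 0 < nl l) ∧ Filter.Tendsto nl Filter.atTop Filter.atTop ∧
  ∀ ε : ℝ, 0 < ε → ∀ F : Finset A, (F : Set A) ⊆ A₀ →
    ∃ l₀ : ℕ, ∀ l, l₀ ≤ l → ∃ v ∈ unitary A,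
      ∀ a ∈ F, ∀ k : ℤ, |k| ≤ (7 * nl l : ℤ) →
        ‖v * (α ^ k) a * star v - (α ^ (nl l)) ((α ^ k) a)‖ < ε


lemma approxInner_mul {A : Type*} [CStarAlgebra A] {β γ : A ≃⋆ₐ[ℂ] A}
    (hβ : ApproxInner β) (hγ : ApproxInner γ) : ApproxInner (β * γ) := by
  classical
  intro F ε hε
  obtain ⟨v, hv, hv2⟩ := hγ F (ε / 2) (by linarith)
  obtain ⟨u, hu, hu2⟩ := hβ (F.image γ) (ε / 2) (by linarith)
  refine ⟨u * v, mul_mem hu hv, fun a ha => ?_⟩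
  have h1 : ‖v * a * star v - γ a‖ < ε / 2 := hv2 a ha
  have h2 : ‖u * γ a * star u - β (γ a)‖ < ε / 2 :=
    hu2 _ (Finset.mem_image_of_mem _ ha)
  have key : u * v * a * star (u * v) - (β * γ) a
      = u * (v * a * star v - γ a) * star u + (u * γ a * star u - β (γ a)) := by
    rw [show ((β * γ) a : A) = β (γ a) by rfl, star_mul]
    noncomm_ring
  have hnorm : ‖u * (v * a * star v - γ a) * star u‖ = ‖v * a * star v - γ a‖ := by
    rw [CStarRing.norm_mul_mem_unitary _ (Unitary.star_mem hu),
      CStarRing.norm_mem_unitary_mul _ hu]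
  calc ‖u * v * a * star (u * v) - (β * γ) a‖
      ≤ ‖u * (v * a * star v - γ a) * star u‖ + ‖u * γ a * star u - β (γ a)‖ := by
        rw [key]; exact norm_add_le _ _
    _ < ε / 2 + ε / 2 := by rw [hnorm]; exact add_lt_add h1 h2
    _ = ε := by ring

lemma approxInner_pow {A : Type*} [CStarAlgebra A] {β : A ≃⋆ₐ[ℂ] A}
    (hβ : ApproxInner β) (m : ℕ) : ApproxInner (β ^ (m + 1)) := by
  induction m with
  | zero => rwa [pow_one]
  | succ m ih =>
    have : β ^ (m + 2) = β ^ (m + 1) * β := pow_succ β (m + 1)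
    rw [this]
    exact approxInner_mul ih hβ

/-- Let `A` be a unital C*-algebra and `α` an automorphism of `A` such
that `α^n` is approximately inner for some integer `n ≥ 1`.  Then `α` is nearly
approximately inner. -/
theorem nearlyApproxInner_of_pow_approxInner
    {A : Type*} [CStarAlgebra A]
    (α : A ≃⋆ₐ[ℂ] A) (n : ℕ) (hn : 1 ≤ n)
    (h : ApproxInner (α ^ n)) :
    NearlyApproxInner α := by
  refine ⟨Metric.closedBall (0 : A) 1, subset_rfl, subset_closure,
    fun l => n * (l + 1), fun l => Nat.mul_pos hn l.succ_pos, ?_, ?_⟩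
  · refine Filter.tendsto_atTop_mono (fun l => ?_) Filter.tendsto_id
    calc (l : ℕ) ≤ l + 1 := Nat.le_succ l
      _ ≤ n * (l + 1) := Nat.le_mul_of_pos_left _ hn
  · classical
    intro ε hε F hF
    refine ⟨0, fun l _ => ?_⟩
    have hm : ApproxInner (α ^ (n * (l + 1))) := by
      rw [pow_mul]
      exact approxInner_pow h l
    obtain ⟨u, hu, hu2⟩ := hm
      (((Finset.Icc (-(7 * (n * (l + 1)) : ℤ)) (7 * (n * (l + 1)) : ℤ)) ×ˢ F).image
        (fun p => (α ^ p.1) p.2)) ε hε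
    refine ⟨u, hu, fun a ha k hk => ?_⟩
    exact hu2 _ (Finset.mem_image.mpr ⟨(k, a),
      Finset.mem_product.mpr ⟨Finset.mem_Icc.mpr ⟨(abs_le.mp hk).1, (abs_le.mp hk).2⟩, ha⟩, rfl⟩)

end
end

section
/- Let A be a unital C*-algebra and let α be an automorphism of A. Suppose there exist a dense subset A₀ of the closed unit ball of A and a sequence of positive integers n_l → ∞ such that for every ε > 0 and every finite F ⊂ A₀ there exists l₀ ∈ ℕ such that for all l ≥ l₀ there is a unitary v_l ∈ A with v_l·α(v_l)* lying in the center of A and ‖v_l a v_l* − α^{n_l}(a)‖ < ε for all a ∈ F. Then α is nearly approximately inner. -/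
open scoped Matrix.Norms.L2Operator ZeroAtInfty

noncomputable section

/-- Let `A` be a unital C*-algebra and `α` an automorphism of `A`.
Suppose there exist a dense subset `A₀` of the closed unit ball of `A` and a sequence of
positive integers `n_l → ∞` such that for every `ε > 0` and finite `F ⊆ A₀` there is `l₀`
such that for all `l ≥ l₀` there is a unitary `v` with `v ⬝ α(v)*` central and
`‖v a v* - α^{n_l}(a)‖ < ε` for all `a ∈ F`.  Then `α` is nearly approximately inner. -/
theorem nearlyApproxInner_of_central_intertwiner
    {A : Type*} [CStarAlgebra A]
    (α : A ≃⋆ₐ[ℂ] A)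
    (h : ∃ A₀ : Set A, A₀ ⊆ Metric.closedBall (0 : A) 1 ∧
      Metric.closedBall (0 : A) 1 ⊆ closure A₀ ∧
      ∃ nl : ℕ → ℕ, (∀ l, 0 < nl l) ∧ Filter.Tendsto nl Filter.atTop Filter.atTop ∧
      ∀ ε : ℝ, 0 < ε → ∀ F : Finset A, (F : Set A) ⊆ A₀ →
        ∃ l₀ : ℕ, ∀ l, l₀ ≤ l → ∃ v ∈ unitary A,
          v * star (α v) ∈ Set.center A ∧
          ∀ a ∈ F, ‖v * a * star v - (α ^ (nl l)) a‖ < ε) :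
    NearlyApproxInner α := by
  obtain ⟨A₀, hA₀ball, hA₀dense, nl, hnlpos, hnltend, hmain⟩ := h
  refine ⟨A₀, hA₀ball, hA₀dense, nl, hnlpos, hnltend, ?_⟩
  intro ε hε F hF
  obtain ⟨l₀, hl₀⟩ := hmain ε hε F hF
  refine ⟨l₀, fun l hl => ?_⟩
  obtain ⟨v, hv, hz, hest⟩ := hl₀ l hl
  refine ⟨v, hv, fun a ha k hk => ?_⟩
  have hv1 : star v * v = 1 := (Unitary.mem_iff.mp hv).1
  have hv2 : v * star v = 1 := (Unitary.mem_iff.mp hv).2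
  have hαv1 : star (α v) * α v = 1 := by
    rw [← map_star, ← map_mul, hv1, map_one]
  have hcomm : ∀ y : A, (v * star (α v)) * y = y * (v * star (α v)) :=
    fun y => (Set.mem_center_iff.mp hz).comm y
  have hzz : (v * star (α v)) * star (v * star (α v)) = 1 := by
    rw [star_mul, star_star, mul_assoc, ← mul_assoc (star (α v)), hαv1, one_mul, hv2]
  have hvz : (v * star (α v)) * α v = v := by
    rw [mul_assoc, hαv1, mul_one]
  have key : ∀ x : A, v * x * star v = α v * x * star (α v) := by
    intro x
    calc v * x * star v
        = ((v * star (α v)) * α v) * x * star ((v * star (α v)) * α v) := by rw [hvz]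
      _ = (v * star (α v)) * (α v * x * star (α v)) * star (v * star (α v)) := by
          rw [star_mul]; noncomm_ring
      _ = (α v * x * star (α v)) * ((v * star (α v)) * star (v * star (α v))) := by
          rw [hcomm (α v * x * star (α v))]; noncomm_ring
      _ = α v * x * star (α v) := by rw [hzz, mul_one]
  have hconj : ∀ x : A, α (v * x * star v) = v * α x * star v := by
    intro x
    rw [map_mul, map_mul, map_star, ← key (α x)]
  have hconjinv : ∀ x : A, α.symm (v * x * star v) = v * α.symm x * star v := by
    intro x
    conv_lhs => rw [← α.apply_symm_apply x]
    rw [← hconj, α.symm_apply_apply]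
  have mul_apply' : ∀ (e f : A ≃⋆ₐ[ℂ] A) (x : A), (e * f) x = e (f x) := fun _ _ _ => rfl
  have inv_apply' : ∀ (x : A), (α⁻¹) x = α.symm x := fun _ => rfl
  have hconjz : ∀ (m : ℤ) (x : A), (α ^ m) (v * x * star v) = v * ((α ^ m) x) * star v := by
    intro m
    induction m using Int.induction_on with
    | zero => intro x; rw [zpow_zero]; rfl
    | succ n ih =>
        intro x
        rw [zpow_add_one, mul_apply', mul_apply', hconj, ih]
    | pred n ih =>
        intro x
        rw [zpow_sub_one, mul_apply', mul_apply', inv_apply', hconjinv, ih]; rfl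
  have hswap : (α ^ (nl l)) ((α ^ k) a) = (α ^ k) ((α ^ (nl l)) a) := by
    rw [← zpow_natCast α (nl l), ← mul_apply', ← mul_apply', ← zpow_add, ← zpow_add, add_comm]
  rw [hswap, ← hconjz k a, ← map_sub, StarAlgEquiv.norm_map]
  exact hest a ha

end
end

section
/- Let G be a compact metrizable topological group and let g ∈ G. Let α be the automorphism of the C*-algebra C(G) of continuous complex-valued functions on G defined by α(f)(h) = f(g⁻¹h) for f ∈ C(G) and h ∈ G. Then α is nearly approximately inner; in fact, the witnessing unitaries can all be taken equal to 1, i.e., there exist a dense subset A₀ of the closed unit ball of C(G) and a sequence of positive integers n_l → ∞ such that for every ε > 0 and finite F ⊂ A₀ one has ‖a − α^{n_l}(a)‖ < ε for all a ∈ F and all sufficiently large l. -/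
open Filter Topology

private lemma strictMono_add_le_aux {φ : ℕ → ℕ} (hφ : StrictMono φ) (a k : ℕ) :
    φ a + k ≤ φ (a + k) := by
  induction k with
  | zero => simp
  | succ k ih =>
    have h1 : φ (a + k) < φ (a + k + 1) := hφ (Nat.lt_succ_self _)
    have h2 : a + (k + 1) = a + k + 1 := rfl
    rw [h2]
    omega

/-- In a compact metrizable group, for every `g` there is a sequence `n_l → ∞` of positive
integers with `g ^ n_l → 1`. -/
private lemma exists_pow_tendsto_one {G : Type*} [TopologicalSpace G] [Group G]
    [IsTopologicalGroup G] [CompactSpace G] [TopologicalSpace.MetrizableSpace G] (g : G) :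
    ∃ nl : ℕ → ℕ, (∀ l, 0 < nl l) ∧ Tendsto nl atTop atTop ∧
      Tendsto (fun l => g ^ nl l) atTop (𝓝 1) := by
  obtain ⟨h, φ, hφ, hconv⟩ := CompactSpace.tendsto_subseq (fun n => g ^ n)
  have hsq : StrictMono (fun l : ℕ => l * l) := by
    apply strictMono_nat_of_lt_succ
    intro n
    exact Nat.mul_lt_mul_of_lt_of_le (Nat.lt_succ_self n) (Nat.le_succ n) (Nat.succ_pos n)
  set nl : ℕ → ℕ := fun l => φ ((l+1)*(l+1)) - φ (l*l) with hnl
  have hgap : ∀ l, φ (l*l) + (l+1) ≤ φ ((l+1)*(l+1)) := by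
    intro l
    have h1 : φ (l*l) + (l+1) ≤ φ (l*l + (l+1)) := strictMono_add_le_aux hφ _ _
    have h2 : l*l + (l+1) ≤ (l+1)*(l+1) := by nlinarith
    exact h1.trans (hφ.monotone h2)
  have hle : ∀ l, l + 1 ≤ nl l := fun l => by have := hgap l; simp only [hnl]; omega
  refine ⟨nl, fun l => by have := hle l; omega, ?_, ?_⟩
  · exact tendsto_atTop.mpr fun b =>
      eventually_atTop.mpr ⟨b, fun l hl => le_trans (by omega) (hle l)⟩
  · have key : ∀ l, g ^ nl l = (g ^ φ (l*l))⁻¹ * g ^ φ ((l+1)*(l+1)) := by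
      intro l
      have hb : φ (l*l) ≤ φ ((l+1)*(l+1)) := by have := hgap l; omega
      rw [hnl]
      rw [pow_sub g hb]
      group
    have t1 : Tendsto (fun l => g ^ φ (l*l)) atTop (𝓝 h) :=
      hconv.comp (hsq.tendsto_atTop)
    have t2 : Tendsto (fun l => g ^ φ ((l+1)*(l+1))) atTop (𝓝 h) := by
      have hm : StrictMono (fun l : ℕ => (l+1)*(l+1)) := fun a b hab => hsq (by omega)
      exact hconv.comp hm.tendsto_atTop
    have := (t1.inv).mul t2
    rw [inv_mul_cancel] at this
    simp only [key]
    exact this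

private lemma starAlgEquiv_mul_apply {G : Type*} [TopologicalSpace G] [CompactSpace G]
    (e f : C(G, ℂ) ≃⋆ₐ[ℂ] C(G, ℂ)) (x : C(G, ℂ)) : (e * f) x = e (f x) := rfl

private lemma alpha_pow_apply {G : Type*} [TopologicalSpace G] [Group G] [IsTopologicalGroup G]
    [CompactSpace G] (g : G) (α : C(G, ℂ) ≃⋆ₐ[ℂ] C(G, ℂ))
    (hα : α = (Homeomorph.mulLeft g⁻¹).compStarAlgEquiv' ℂ ℂ)
    (n : ℕ) (a : C(G, ℂ)) (h : G) : ((α ^ n) a) h = a ((g ^ n)⁻¹ * h) := by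
  have hstep : ∀ (f : C(G, ℂ)) (h : G), (α f) h = f (g⁻¹ * h) := by
    rw [hα]; intro f h; rfl
  induction n generalizing h with
  | zero => simp [show (1 : C(G, ℂ) ≃⋆ₐ[ℂ] C(G, ℂ)) a = a from rfl]
  | succ n ih =>
    rw [pow_succ', starAlgEquiv_mul_apply, hstep, ih]
    congr 1
    simp [pow_succ', mul_assoc]

/-- Let `G` be a compact metrizable topological group and `g ∈ G`.  Let
`α` be the automorphism of `C(G)` given by `α(f)(h) = f(g⁻¹ h)` (translation by `g`).  Then
`α` is nearly approximately inner; in fact the witnessing unitaries can all be taken to be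
equal to `1`. -/
theorem nearlyApproxInner_translation
    {G : Type*} [TopologicalSpace G] [Group G] [IsTopologicalGroup G]
    [CompactSpace G] [TopologicalSpace.MetrizableSpace G]
    (g : G)
    (α : C(G, ℂ) ≃⋆ₐ[ℂ] C(G, ℂ))
    (hα : α = (Homeomorph.mulLeft g⁻¹).compStarAlgEquiv' ℂ ℂ) :
    NearlyApproxInner α ∧
    (∃ A₀ : Set C(G, ℂ), A₀ ⊆ Metric.closedBall (0 : C(G, ℂ)) 1 ∧
      Metric.closedBall (0 : C(G, ℂ)) 1 ⊆ closure A₀ ∧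
      ∃ nl : ℕ → ℕ, (∀ l, 0 < nl l) ∧ Filter.Tendsto nl Filter.atTop Filter.atTop ∧
      ∀ ε : ℝ, 0 < ε → ∀ F : Finset C(G, ℂ), (F : Set C(G, ℂ)) ⊆ A₀ →
        ∃ l₀ : ℕ, ∀ l, l₀ ≤ l → ∀ a ∈ F, ‖a - (α ^ (nl l)) a‖ < ε) := by
  obtain ⟨nl, hpos, htd, hg1⟩ := exists_pow_tendsto_one g
  -- Main convergence: for every `a`, `α^{n_l} a → a` in norm.
  have main : ∀ a : C(G, ℂ), Tendsto (fun l => ‖a - (α ^ (nl l)) a‖) atTop (𝓝 0) := by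
    intro a
    set m : C(G × G, G) := ⟨fun p => p.1 * p.2, continuous_mul⟩ with hm
    set T : G → C(G, ℂ) := fun x => a.comp ((ContinuousMap.curry m) x) with hT
    have hTc : Continuous T :=
      (ContinuousMap.continuous_postcomp a).comp (ContinuousMap.curry m).continuous
    have heq : ∀ n : ℕ, (α ^ n) a = T ((g ^ n)⁻¹) := by
      intro n
      ext h
      exact alpha_pow_apply g α hα n a h
    have hT1 : T 1 = a := by
      ext h
      show a (1 * h) = a h
      rw [one_mul]
    have hinv : Tendsto (fun l => (g ^ nl l)⁻¹) atTop (𝓝 1) := by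
      have := hg1.inv
      rwa [inv_one] at this
    have hconv : Tendsto (fun l => (α ^ (nl l)) a) atTop (𝓝 a) := by
      simp only [heq]
      rw [← hT1]
      exact (hTc.tendsto 1).comp hinv
    have := (tendsto_iff_norm_sub_tendsto_zero).mp hconv
    simpa only [norm_sub_rev] using this
  have mainε : ∀ ε : ℝ, 0 < ε → ∀ F : Finset C(G, ℂ),
      ∃ l₀ : ℕ, ∀ l, l₀ ≤ l → ∀ a ∈ F, ‖a - (α ^ (nl l)) a‖ < ε := by
    intro ε hε F
    have hev : ∀ᶠ l in atTop, ∀ a ∈ F, ‖a - (α ^ (nl l)) a‖ < ε :=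
      (Filter.eventually_all_finite F.finite_toSet).mpr
        (fun a _ => (main a).eventually (gt_mem_nhds hε))
    obtain ⟨l₀, hl₀⟩ := eventually_atTop.mp hev
    exact ⟨l₀, hl₀⟩
  constructor
  · refine ⟨Metric.closedBall 0 1, subset_rfl, subset_closure, nl, hpos, htd, ?_⟩
    intro ε hε F hF
    obtain ⟨l₀, hl₀⟩ := mainε ε hε F
    refine ⟨l₀, fun l hl => ⟨1, one_mem (unitary _), fun a ha k _ => ?_⟩⟩
    have hcomm : (α ^ (nl l)) ((α ^ k) a) = (α ^ k) ((α ^ (nl l)) a) := by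
      have h1 : α ^ (nl l : ℤ) * α ^ k = α ^ k * α ^ (nl l : ℤ) := by
        rw [← zpow_add, add_comm, zpow_add]
      have h2 : (α ^ (nl l) : C(G, ℂ) ≃⋆ₐ[ℂ] C(G, ℂ)) = α ^ (nl l : ℤ) :=
        (zpow_natCast α (nl l)).symm
      rw [h2]
      calc (α ^ (nl l : ℤ)) ((α ^ k) a) = (α ^ (nl l : ℤ) * α ^ k) a := rfl
        _ = (α ^ k * α ^ (nl l : ℤ)) a := by rw [h1]
        _ = (α ^ k) ((α ^ (nl l : ℤ)) a) := rfl
    rw [one_mul, star_one, mul_one, hcomm, ← map_sub (α ^ k)]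
    rw [StarAlgEquiv.norm_map (α ^ k)]
    exact hl₀ l hl a ha
  · refine ⟨Metric.closedBall 0 1, subset_rfl, subset_closure, nl, hpos, htd, ?_⟩
    intro ε hε F _
    exact mainε ε hε F
end

section
/- Let B be a unital C*-algebra, let u, v ∈ B be unitaries, let n ≥ 1 be an integer, and let f₀, f₁, …, f_{14n−1} ∈ B be pairwise orthogonal projections (f_k = f_k* = f_k² and f_k f_j = 0 for k ≠ j) such that u f_k u* = f_{k+1} for 0 ≤ k ≤ 14n−2 and such that each f_k commutes with u^j v u^{−j} for every integer j. Write α(x) = u x u*, and let h₀, …, h_{7n−1} ∈ [0,1] be scalars. Set c = Σ_{k=0}^{7n−1} h_k^{1/2} · f_k · u^{−7n} · α^k(v⁷), where α^k(v⁷) = u^k v⁷ u^{−k}. Then c·c* = Σ_{k=0}^{7n−1} h_k f_k and c*·c = Σ_{k=0}^{7n−1} h_k f_{k+7n}. -/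
noncomputable section

/-- Let `B` be a unital C*-algebra, `u, v` unitaries, `n ≥ 1`, and let
`f₀, …, f_{14n-1}` be pairwise orthogonal projections such that `u f_k u* = f_{k+1}` for
`0 ≤ k ≤ 14n - 2` and each `f_k` commutes with `u^j v u^{-j}` for every integer `j`.  With
`α(x) = u x u*` and scalars `h₀, …, h_{7n-1} ∈ [0,1]`, setting
`c = Σ_{k<7n} h_k^{1/2} f_k u^{-7n} α^k(v⁷)` one has
`c c* = Σ_{k<7n} h_k f_k` and `c* c = Σ_{k<7n} h_k f_{k+7n}`. -/
theorem rokhlin_tower_cuntz_equivalence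
    {B : Type*} [CStarAlgebra B]
    (u : unitary B) (v : B) (hv : v ∈ unitary B)
    (n : ℕ) (hn : 1 ≤ n)
    (f : ℕ → B)
    (hproj : ∀ k, k < 14 * n → IsSelfAdjoint (f k) ∧ f k * f k = f k)
    (horth : ∀ k, k < 14 * n → ∀ j, j < 14 * n → k ≠ j → f k * f j = 0)
    (hshift : ∀ k, k + 1 ≤ 14 * n - 1 → (u : B) * f k * star (u : B) = f (k + 1))
    (hcomm : ∀ k, k < 14 * n → ∀ j : ℤ,
      Commute (f k) (((u ^ j : unitary B) : B) * v * star ((u ^ j : unitary B) : B)))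
    (h : ℕ → ℝ) (hh : ∀ k, k < 7 * n → h k ∈ Set.Icc (0 : ℝ) 1)
    (c : B)
    (hc : c = ∑ k ∈ Finset.range (7 * n),
      ((Real.sqrt (h k) : ℂ)) •
        (f k * star ((u : B) ^ (7 * n)) * ((u : B) ^ k * v ^ 7 * star ((u : B) ^ k)))) :
    c * star c = ∑ k ∈ Finset.range (7 * n), ((h k : ℝ) : ℂ) • f k ∧
    star c * c = ∑ k ∈ Finset.range (7 * n), ((h k : ℝ) : ℂ) • f (k + 7 * n) := by
  set U : B := (u : B) with hUdef
  have hU1 : star U * U = 1 := Unitary.coe_star_mul_self u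
  have hU2 : U * star U = 1 := Unitary.coe_mul_star_self u
  -- powers of U are unitary
  have hUm : ∀ m : ℕ, star (U ^ m) * U ^ m = 1 ∧ U ^ m * star (U ^ m) = 1 := by
    intro m
    induction m with
    | zero => simp
    | succ m ih =>
      constructor
      · rw [pow_succ, star_mul]
        calc star U * star (U ^ m) * (U ^ m * U)
            = star U * (star (U ^ m) * U ^ m) * U := by
              simp only [mul_assoc]
          _ = 1 := by rw [ih.1, mul_one, hU1]
      · rw [pow_succ, star_mul]
        calc U ^ m * U * (star U * star (U ^ m))
            = U ^ m * (U * star U) * star (U ^ m) := by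
              simp only [mul_assoc]
          _ = 1 := by rw [hU2, mul_one, ih.2]
  -- iterated shift
  have hshift' : ∀ m k, k + m ≤ 14 * n - 1 → U ^ m * f k * star (U ^ m) = f (k + m) := by
    intro m
    induction m with
    | zero => intro k _; simp
    | succ m ih =>
      intro k hk
      have h1 : k + m ≤ 14 * n - 1 := by omega
      have h2 : (k + m) + 1 ≤ 14 * n - 1 := by omega
      calc U ^ (m + 1) * f k * star (U ^ (m + 1))
          = U * (U ^ m * f k * star (U ^ m)) * star U := by
            rw [pow_succ', star_mul]
            simp only [mul_assoc]
        _ = U * f (k + m) * star U := by rw [ih k h1]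
        _ = f (k + m + 1) := hshift (k + m) h2
        _ = f (k + (m + 1)) := by ring_nf
  set N := 7 * n with hNdef
  -- moving f past U^N
  have hUf : ∀ l, l < N → U ^ N * f l = f (l + N) * U ^ N := by
    intro l hl
    have hle : l + N ≤ 14 * n - 1 := by omega
    have := hshift' N l hle
    calc U ^ N * f l = U ^ N * f l * (star (U ^ N) * U ^ N) := by
          rw [(hUm N).1, mul_one]
      _ = (U ^ N * f l * star (U ^ N)) * U ^ N := by simp only [mul_assoc]
      _ = f (l + N) * U ^ N := by rw [this]
  have hfU : ∀ l, l < N → star (U ^ N) * f (l + N) = f l * star (U ^ N) := by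
    intro l hl
    calc star (U ^ N) * f (l + N)
        = star (U ^ N) * f (l + N) * (U ^ N * star (U ^ N)) := by rw [(hUm N).2, mul_one]
      _ = star (U ^ N) * (f (l + N) * U ^ N) * star (U ^ N) := by simp only [mul_assoc]
      _ = star (U ^ N) * (U ^ N * f l) * star (U ^ N) := by rw [← hUf l hl]
      _ = (star (U ^ N) * U ^ N) * (f l * star (U ^ N)) := by simp only [mul_assoc]
      _ = f l * star (U ^ N) := by rw [(hUm N).1, one_mul]
  -- commutation with natural power conjugates
  have hcomm' : ∀ k, k < 14 * n → ∀ j : ℕ, Commute (f k) (U ^ j * v * star (U ^ j)) := by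
    intro k hk j
    have := hcomm k hk (j : ℤ)
    rwa [zpow_natCast, SubmonoidClass.coe_pow] at this
  -- conjugation of powers
  have hwpow : ∀ j m : ℕ, (U ^ j * v * star (U ^ j)) ^ m = U ^ j * v ^ m * star (U ^ j) := by
    intro j m
    induction m with
    | zero => rw [pow_zero, pow_zero, mul_one, (hUm j).2]
    | succ m ih =>
      rw [pow_succ, ih]
      calc U ^ j * v ^ m * star (U ^ j) * (U ^ j * v * star (U ^ j))
          = U ^ j * v ^ m * (star (U ^ j) * U ^ j) * v * star (U ^ j) := by
            simp only [mul_assoc]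
        _ = U ^ j * v ^ (m + 1) * star (U ^ j) := by
            rw [(hUm j).1, mul_one, pow_succ]
            simp only [mul_assoc]
  set w : ℕ → B := fun j => U ^ j * v ^ 7 * star (U ^ j) with hwdef
  have hfw : ∀ k, k < 14 * n → ∀ j, Commute (f k) (w j) := by
    intro k hk j
    have := (hcomm' k hk j).pow_right 7
    rwa [hwpow j 7] at this
  have hfwstar : ∀ k, k < 14 * n → ∀ j, Commute (f k) (star (w j)) := by
    intro k hk j
    have := (hfw k hk j).star_star
    rwa [(hproj k hk).1.star_eq] at this
  have hvsm : star (v ^ 7) * v ^ 7 = 1 := Unitary.star_mul_self_of_mem (pow_mem hv 7)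
  have hvms : v ^ 7 * star (v ^ 7) = 1 := Unitary.mul_star_self_of_mem (pow_mem hv 7)
  have hwstar : ∀ j, star (w j) = U ^ j * star (v ^ 7) * star (U ^ j) := by
    intro j
    simp only [hwdef, star_mul, star_star, mul_assoc]
  have hww : ∀ j, w j * star (w j) = 1 := by
    intro j
    rw [hwstar j]
    calc U ^ j * v ^ 7 * star (U ^ j) * (U ^ j * star (v ^ 7) * star (U ^ j))
        = U ^ j * v ^ 7 * (star (U ^ j) * U ^ j) * star (v ^ 7) * star (U ^ j) := by
          simp only [mul_assoc]
      _ = 1 := by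
          rw [(hUm j).1, mul_one]
          calc U ^ j * v ^ 7 * star (v ^ 7) * star (U ^ j)
              = U ^ j * (v ^ 7 * star (v ^ 7)) * star (U ^ j) := by simp only [mul_assoc]
            _ = 1 := by rw [hvms, mul_one, (hUm j).2]
  have hsww : ∀ j, star (w j) * w j = 1 := by
    intro j
    rw [hwstar j]
    calc U ^ j * star (v ^ 7) * star (U ^ j) * (U ^ j * v ^ 7 * star (U ^ j))
        = U ^ j * star (v ^ 7) * (star (U ^ j) * U ^ j) * v ^ 7 * star (U ^ j) := by
          simp only [mul_assoc]
      _ = 1 := by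
          rw [(hUm j).1, mul_one]
          calc U ^ j * star (v ^ 7) * v ^ 7 * star (U ^ j)
              = U ^ j * (star (v ^ 7) * v ^ 7) * star (U ^ j) := by simp only [mul_assoc]
            _ = 1 := by rw [hvsm, mul_one, (hUm j).2]
  set a : ℕ → B := fun k => f k * star (U ^ N) * w k with hadef
  have hastar : ∀ l, l < N → star (a l) = star (w l) * (U ^ N * f l) := by
    intro l hl
    simp only [hadef, star_mul, star_star, (hproj l (by omega)).1.star_eq, mul_assoc]
  -- the two key computations
  have key1 : ∀ k l, k < N → l < N → a k * star (a l) = if k = l then f k else 0 := by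
    intro k l hk hl
    have hlN : l + N < 14 * n := by omega
    rw [hastar l hl]
    have e1 : a k * (star (w l) * (U ^ N * f l))
        = f k * (f l * (star (U ^ N) * (w k * (star (w l) * U ^ N)))) := by
      simp only [hadef, mul_assoc]
      rw [hUf l hl]
      rw [((hfwstar (l + N) hlN l).symm.left_comm (U ^ N) : star (w l) * (f (l + N) * U ^ N) = _)]
      rw [((hfw (l + N) hlN k).symm.left_comm (star (w l) * U ^ N))]
      rw [← mul_assoc (star (U ^ N)) (f (l + N)), hfU l hl, mul_assoc]
    rw [e1]
    by_cases hkl : k = l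
    · subst hkl
      rw [if_pos rfl]
      rw [← mul_assoc (w k), hww k, one_mul, (hUm N).1, mul_one,
        (hproj k (by omega)).2]
    · rw [if_neg hkl, ← mul_assoc (f k) (f l), horth k (by omega) l (by omega) hkl,
        zero_mul]
  have key2 : ∀ k l, k < N → l < N → star (a k) * a l = if k = l then f (k + N) else 0 := by
    intro k l hk hl
    have hkN : k + N < 14 * n := by omega
    rw [hastar k hk]
    have e1 : star (w k) * (U ^ N * f k) * a l
        = star (w k) * (U ^ N * (f k * (f l * (star (U ^ N) * w l)))) := by
      simp only [hadef, mul_assoc]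
    rw [e1]
    by_cases hkl : k = l
    · subst hkl
      rw [if_pos rfl]
      calc star (w k) * (U ^ N * (f k * (f k * (star (U ^ N) * w k))))
          = star (w k) * (U ^ N * ((f k * f k) * (star (U ^ N) * w k))) := by
            simp only [mul_assoc]
        _ = star (w k) * (U ^ N * (f k * (star (U ^ N) * w k))) := by
            rw [(hproj k (by omega)).2]
        _ = star (w k) * ((U ^ N * f k) * (star (U ^ N) * w k)) := by
            simp only [mul_assoc]
        _ = star (w k) * ((f (k + N) * U ^ N) * (star (U ^ N) * w k)) := by rw [hUf k hk]
        _ = star (w k) * (f (k + N) * ((U ^ N * star (U ^ N)) * w k)) := by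
            simp only [mul_assoc]
        _ = star (w k) * (f (k + N) * w k) := by rw [(hUm N).2, one_mul]
        _ = f (k + N) * (star (w k) * w k) := (hfwstar (k + N) hkN k).symm.left_comm _
        _ = f (k + N) := by rw [hsww k, mul_one]
    · rw [if_neg hkl, ← mul_assoc (f k) (f l), horth k (by omega) l (by omega) hkl]
      simp
  -- assemble the sums
  have hcsum : c = ∑ k ∈ Finset.range N, ((Real.sqrt (h k) : ℂ)) • a k := by
    rw [hc]
  have hstarc : star c = ∑ l ∈ Finset.range N, ((Real.sqrt (h l) : ℂ)) • star (a l) := by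
    rw [hcsum, star_sum]
    exact Finset.sum_congr rfl fun l hl => by
      rw [star_smul, RCLike.star_def, Complex.conj_ofReal]
  have hsq : ∀ k, k < N → ((Real.sqrt (h k) : ℂ)) * ((Real.sqrt (h k) : ℂ)) = ((h k : ℝ) : ℂ) := by
    intro k hk
    rw [← Complex.ofReal_mul, Real.mul_self_sqrt (hh k hk).1]
  constructor
  · rw [hstarc, hcsum, Finset.sum_mul_sum]
    refine Finset.sum_congr rfl fun k hk => ?_
    rw [Finset.mem_range] at hk
    rw [Finset.sum_eq_single k]
    · rw [smul_mul_smul_comm, key1 k k hk hk, if_pos rfl, hsq k hk]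
    · intro l hl hlk
      rw [Finset.mem_range] at hl
      rw [smul_mul_smul_comm, key1 k l hk hl, if_neg (Ne.symm hlk), smul_zero]
    · intro hk'; exact absurd (Finset.mem_range.mpr hk) hk'
  · rw [hstarc, hcsum, Finset.sum_mul_sum]
    refine Finset.sum_congr rfl fun k hk => ?_
    rw [Finset.mem_range] at hk
    rw [Finset.sum_eq_single k]
    · rw [smul_mul_smul_comm, key2 k k hk hk, if_pos rfl, hsq k hk]
    · intro l hl hlk
      rw [Finset.mem_range] at hl
      rw [smul_mul_smul_comm, key2 k l hk hl, if_neg (Ne.symm hlk), smul_zero]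
    · intro hk'; exact absurd (Finset.mem_range.mpr hk) hk'
end
end
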